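/- Comparability of optimal balls with dyadic cubes: let 0 < α < d, f ∈ L^1_loc(ℝ^d) nonnegative, and let B ∈ B_α be an optimal ball for the (centered or uncentered) fractional maximal operator M_α. Fix a dyadic grid system in which B is contained in a dyadic cube Q_B with ℓ(Q_B) ≤ C_d r(B). Then f_{Q_B} ≍_d f_B and ℓ(Q_B) ≍_d r(B); moreover, for every cube P ⊇ Q_B, ℓ(P)^α f_P ≤ C_{d,α} ℓ(Q_B)^α f_{Q_B}. -/

import Mathlib

open MeasureTheory Metric Set Filter

noncomputable section

abbrev Euc (d : ℕ) : Type := EuclideanSpace ℝ (Fin d)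

def setAvg {d : ℕ} (s : Set (Euc d)) (f : Euc d → ℝ) : ℝ :=
  (volume s).toReal⁻¹ * ∫ y in s, f y

/-- An axis-parallel half-open cube with lower corner `a` and side length `s`. -/
def cubeA (d : ℕ) (a : Euc d) (s : ℝ) : Set (Euc d) :=
  {y | ∀ i, a i ≤ y i ∧ y i < a i + s}

/-- The uncentered fractional Hardy–Littlewood maximal function. -/
def Mu (d : ℕ) (α : ℝ) (f : Euc d → ℝ) (x : Euc d) : ℝ :=
  sSup {v | ∃ z : Euc d, ∃ r : ℝ, 0 < r ∧ x ∈ ball z r ∧ v = r ^ α * setAvg (ball z r) f}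

/-- The centered fractional Hardy–Littlewood maximal function. -/
def Mc (d : ℕ) (α : ℝ) (f : Euc d → ℝ) (x : Euc d) : ℝ :=
  sSup {v | ∃ r : ℝ, 0 < r ∧ v = r ^ α * setAvg (ball x r) f}

/-- `ball z r` is an optimal ball for the centered fractional maximal operator. -/
def memBc (d : ℕ) (α : ℝ) (f : Euc d → ℝ) (z : Euc d) (r : ℝ) : Prop :=
  0 < r ∧ r ^ α * setAvg (ball z r) f = Mc d α f z ∧
    ∀ r' : ℝ, r < r' → r' ^ α * setAvg (ball z r') f < Mc d α f z

/-- `ball z r` is an optimal ball for the uncentered fractional maximal operator. -/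
def memBu (d : ℕ) (α : ℝ) (f : Euc d → ℝ) (z : Euc d) (r : ℝ) : Prop :=
  0 < r ∧ ∃ x ∈ closure (ball z r),
    r ^ α * setAvg (ball z r) f = Mu d α f x ∧
    ∀ (z' : Euc d) (r' : ℝ), ball z r ⊂ ball z' r' →
      r' ^ α * setAvg (ball z' r') f < Mu d α f x

/-!
Optimality of `B = ball z r`, for either maximal operator, enters only through the comparison
`R ^ α f_{B(z,R)} ≤ r ^ α f_B` with larger concentric balls. If a cube `P` of side `t` contains
`B`, then `r ≤ √d t` and `P ⊆ A := B(z, 2√d t)`, so `f_P ≲_d f_A` by comparing volumes, and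
`t ^ α f_P ≲_d r(A) ^ α f_A ≤ r ^ α f_B`. For `P = Q_B` this gives `f_{Q_B} ≲ f_B`; conversely
`B ⊆ Q_B` with `ℓ(Q_B) ≤ K r` gives `f_B ≲ f_{Q_B}`, and the bound for `P ⊇ Q_B` combines both.
-/

lemma EuclideanSpace.dist_le_sqrt_card_mul {ι : Type*} [Fintype ι] {x y : EuclideanSpace ℝ ι}
    {u : ℝ} (hu : 0 ≤ u) (h : ∀ i, |x i - y i| ≤ u) : dist x y ≤ √(Fintype.card ι) * u := by
  calc dist x y = √(∑ i, dist (x i) (y i) ^ 2) := EuclideanSpace.dist_eq x y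
    _ ≤ √(∑ _i : ι, u ^ 2) := by
      gcongr with i
      rw [Real.dist_eq]
      exact h i
    _ = √(Fintype.card ι) * u := by
      rw [Finset.sum_const, Finset.card_univ, nsmul_eq_mul,
        Real.sqrt_mul (Nat.cast_nonneg _), Real.sqrt_sq hu]

section Cube

variable {d : ℕ}

lemma cubeA_subset_closedBall {a x : Euc d} {s : ℝ} (hs : 0 ≤ s) (hx : x ∈ cubeA d a s) :
    cubeA d a s ⊆ closedBall x (√d * s) := fun y hy => by
  simpa using EuclideanSpace.dist_le_sqrt_card_mul (x := y) (y := x) hs fun i => by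
    have := hx i
    have := hy i
    rw [abs_le]
    constructor <;> linarith

lemma cubeA_eq_preimage_pi (a : Euc d) (s : ℝ) :
    cubeA d a s = WithLp.ofLp ⁻¹' univ.pi fun i => Ico (a i) (a i + s) := by
  ext y
  simp [cubeA]

lemma volume_cubeA (a : Euc d) (s : ℝ) : volume (cubeA d a s) = ENNReal.ofReal s ^ d := by
  rw [cubeA_eq_preimage_pi, (PiLp.volume_preserving_ofLp (Fin d)).measure_preimage
    (MeasurableSet.univ_pi fun _ => measurableSet_Ico).nullMeasurableSet, Real.volume_pi_Ico]
  simp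

end Cube

section Average

variable {d : ℕ} {f : Euc d → ℝ}

lemma setAvg_nonneg (hf : 0 ≤ f) (s : Set (Euc d)) : 0 ≤ setAvg s f :=
  mul_nonneg (inv_nonneg.mpr ENNReal.toReal_nonneg) (integral_nonneg hf)

lemma setAvg_le_mul_setAvg_of_subset {s t : Set (Euc d)} (hf : 0 ≤ f)
    (hft : IntegrableOn f t) (hst : s ⊆ t) (hs : volume s ≠ 0) (ht : volume t ≠ ⊤) :
    setAvg s f ≤ (volume t).toReal / (volume s).toReal * setAvg t f := by
  have hs' : 0 < (volume s).toReal :=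
    ENNReal.toReal_pos hs (ne_top_of_le_ne_top ht (measure_mono hst))
  have ht' : 0 < (volume t).toReal := hs'.trans_le (ENNReal.toReal_mono ht (measure_mono hst))
  calc setAvg s f = (volume s).toReal⁻¹ * ∫ y in s, f y := rfl
    _ ≤ (volume s).toReal⁻¹ * ∫ y in t, f y := by
      gcongr
      exact Eventually.of_forall hf
    _ = (volume t).toReal / (volume s).toReal * setAvg t f := by
      unfold setAvg
      field_simp

end Average

lemma le_of_ball_subset_closedBall {E : Type*} [NormedAddCommGroup E] [NormedSpace ℝ E]
    [Nontrivial E] {x y : E} {r ρ : ℝ} (hr : 0 < r) (h : ball x r ⊆ closedBall y ρ) : r ≤ ρ := by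
  have hρ : 0 ≤ ρ := dist_nonneg.trans (mem_closedBall.mp (h (mem_ball_self hr)))
  have := (diam_mono h isBounded_closedBall).trans (diam_closedBall hρ)
  rw [diam_ball_eq x hr.le] at this
  linarith

lemma ball_ssubset_ball {E : Type*} [NormedAddCommGroup E] [NormedSpace ℝ E]
    [Nontrivial E] (x : E) {r R : ℝ} (hr : 0 ≤ r) (hR : r < R) : ball x r ⊂ ball x R := by
  obtain ⟨y, hy⟩ := (NormedSpace.sphere_nonempty (x := x)).mpr hr
  refine ssubset_of_subset_not_subset (ball_subset_ball hR.le) fun h => ?_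
  have := mem_ball.mp (h (mem_ball.mpr ((mem_sphere.mp hy).trans_lt hR)))
  rw [mem_sphere.mp hy] at this
  exact lt_irrefl r this

lemma volume_unit_ball_toReal_pos {d : ℕ} : 0 < (volume (ball (0 : Euc d) 1)).toReal :=
  ENNReal.toReal_pos (measure_ball_pos volume 0 one_pos).ne' measure_ball_lt_top.ne

section Ball

variable {d : ℕ} [NeZero d]

lemma volume_ball_toReal (x : Euc d) {r : ℝ} (hr : 0 ≤ r) :
    (volume (ball x r)).toReal = r ^ d * (volume (ball (0 : Euc d) 1)).toReal := by
  rw [Measure.addHaar_ball volume x hr, ENNReal.toReal_mul, ENNReal.toReal_ofReal (by positivity),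
    finrank_euclideanSpace_fin]

lemma radius_le_of_ball_subset_cubeA {z a : Euc d} {r s : ℝ} (hr : 0 < r) (hs : 0 ≤ s)
    (h : ball z r ⊆ cubeA d a s) : r ≤ √d * s :=
  le_of_ball_subset_closedBall hr (h.trans (cubeA_subset_closedBall hs (h (mem_ball_self hr))))

lemma setAvg_ball_le_of_subset_cubeA {f : Euc d → ℝ} (hf : 0 ≤ f)
    (hfi : LocallyIntegrable f volume) {z a : Euc d} {r s K : ℝ} (hr : 0 < r) (hs : 0 ≤ s)
    (hsub : ball z r ⊆ cubeA d a s) (hsK : s ≤ K * r) :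
    setAvg (ball z r) f ≤
      K ^ d / (volume (ball (0 : Euc d) 1)).toReal * setAvg (cubeA d a s) f := by
  have hv := volume_unit_ball_toReal_pos (d := d)
  have hQ : cubeA d a s ⊆ closedBall z (√d * s) :=
    cubeA_subset_closedBall hs (hsub (mem_ball_self hr))
  refine (setAvg_le_mul_setAvg_of_subset hf ((hfi.integrableOn_isCompact
    (isCompact_closedBall _ _)).mono_set hQ) hsub (measure_ball_pos volume z hr).ne'
    (by rw [volume_cubeA]; exact ENNReal.pow_ne_top ENNReal.ofReal_ne_top)).trans ?_
  rw [volume_cubeA, ENNReal.toReal_pow, ENNReal.toReal_ofReal hs, volume_ball_toReal z hr.le]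
  refine mul_le_mul_of_nonneg_right ?_ (setAvg_nonneg hf _)
  rw [div_le_div_iff₀ (by positivity) hv]
  calc s ^ d * _ ≤ (K * r) ^ d * (volume (ball (0 : Euc d) 1)).toReal := by gcongr
    _ = _ := by ring

end Ball

def ConcentricOptimal (d : ℕ) (α : ℝ) (f : Euc d → ℝ) (z : Euc d) (r : ℝ) : Prop :=
  ∀ R, r < R → R ^ α * setAvg (ball z R) f ≤ r ^ α * setAvg (ball z r) f

section Optimal

variable {d : ℕ} {α : ℝ} {f : Euc d → ℝ} {z : Euc d} {r : ℝ}

lemma memBc.concentricOptimal (h : memBc d α f z r) : ConcentricOptimal d α f z r :=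
  fun R hR => (h.2.2 R hR).le.trans h.2.1.ge

lemma memBu.concentricOptimal [NeZero d] (h : memBu d α f z r) : ConcentricOptimal d α f z r := by
  obtain ⟨hr, x, -, heq, hlt⟩ := h
  exact fun R hR => (hlt z R (ball_ssubset_ball z hr.le hR)).le.trans heq.ge

variable [NeZero d]

lemma ConcentricOptimal.rpow_mul_setAvg_cubeA_le (h : ConcentricOptimal d α f z r)
    (hf : 0 ≤ f) (hfi : LocallyIntegrable f volume) (hα : 0 ≤ α) {b : Euc d} {t : ℝ}
    (ht : 0 < t) (hz : z ∈ cubeA d b t) (hr : r ≤ √d * t) :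
    t ^ α * setAvg (cubeA d b t) f ≤
      (2 * √d) ^ d * (volume (ball (0 : Euc d) 1)).toReal * (r ^ α * setAvg (ball z r) f) := by
  set v := (volume (ball (0 : Euc d) 1)).toReal
  have hd : 1 ≤ √d := Real.one_le_sqrt.mpr (Nat.one_le_cast.mpr NeZero.one_le)
  set R := 2 * √d * t
  have hrR : r < R := by nlinarith
  have htR : t ≤ R := by nlinarith
  have hPB : cubeA d b t ⊆ ball z R :=
    (cubeA_subset_closedBall ht.le hz).trans (closedBall_subset_ball (by nlinarith))
  have hvolP : (volume (cubeA d b t)).toReal = t ^ d := by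
    rw [volume_cubeA, ENNReal.toReal_pow, ENNReal.toReal_ofReal ht.le]
  have havg : setAvg (cubeA d b t) f ≤ (2 * √d) ^ d * v * setAvg (ball z R) f := by
    refine (setAvg_le_mul_setAvg_of_subset hf (hfi.integrableOn_isCompact
      (isCompact_closedBall z R) |>.mono_set ball_subset_closedBall) hPB ?_
      measure_ball_lt_top.ne).trans_eq ?_
    · rw [volume_cubeA]; positivity
    · rw [hvolP, volume_ball_toReal z (by positivity)]
      field_simp
      ring
  calc t ^ α * setAvg (cubeA d b t) f
      ≤ t ^ α * ((2 * √d) ^ d * v * setAvg (ball z R) f) :=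
        mul_le_mul_of_nonneg_left havg (by positivity)
    _ ≤ (2 * √d) ^ d * v * (R ^ α * setAvg (ball z R) f) := by
      rw [mul_left_comm]
      exact mul_le_mul_of_nonneg_left (mul_le_mul_of_nonneg_right
        (Real.rpow_le_rpow ht.le htR hα) (setAvg_nonneg hf _)) (by positivity)
    _ ≤ (2 * √d) ^ d * v * (r ^ α * setAvg (ball z r) f) :=
      mul_le_mul_of_nonneg_left (h R hrR) (by positivity)

lemma ConcentricOptimal.rpow_mul_setAvg_cubeA_le_of_subset (h : ConcentricOptimal d α f z r)
    (hf : 0 ≤ f) (hfi : LocallyIntegrable f volume) (hα : 0 ≤ α) (hr : 0 < r) {a b : Euc d}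
    {s t : ℝ} (hs : 0 ≤ s) (ht : 0 < t) (hsub : ball z r ⊆ cubeA d a s) (hQP : cubeA d a s ⊆ cubeA d b t) :
    t ^ α * setAvg (cubeA d b t) f ≤ (2 * √d) ^ d * (volume (ball (0 : Euc d) 1)).toReal *
      √d ^ α * (s ^ α * setAvg (ball z r) f) := by
  have hrP := hsub.trans hQP
  refine (h.rpow_mul_setAvg_cubeA_le hf hfi hα ht (hrP (mem_ball_self hr))
    (radius_le_of_ball_subset_cubeA hr ht.le hrP)).trans ?_
  rw [mul_assoc _ (√d ^ α), ← mul_assoc (√d ^ α), ← Real.mul_rpow (by positivity) hs]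
  exact mul_le_mul_of_nonneg_left (mul_le_mul_of_nonneg_right (Real.rpow_le_rpow hr.le
    (radius_le_of_ball_subset_cubeA hr hs hsub) hα) (setAvg_nonneg hf _)) (by positivity)

lemma ConcentricOptimal.setAvg_cubeA_le (h : ConcentricOptimal d α f z r) (hf : 0 ≤ f)
    (hfi : LocallyIntegrable f volume) (hα : 0 ≤ α) (hr : 0 < r) {a : Euc d} {s : ℝ}
    (hs : 0 < s) (hsub : ball z r ⊆ cubeA d a s) :
    setAvg (cubeA d a s) f ≤ (2 * √d) ^ d * (volume (ball (0 : Euc d) 1)).toReal *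
      √d ^ α * setAvg (ball z r) f := by
  refine le_of_mul_le_mul_left ?_ (Real.rpow_pos_of_pos hs α)
  rw [mul_left_comm]
  exact h.rpow_mul_setAvg_cubeA_le_of_subset hf hfi hα hr hs.le hs hsub subset_rfl

end Optimal

theorem stmt18 (d : ℕ) (α : ℝ) (hα : 0 < α) (hαd : α < d)
    (K : ℝ) (hK : 0 < K) :
    ∃ C : ℝ, 0 < C ∧
      ∀ (f : Euc d → ℝ), 0 ≤ f → MeasureTheory.LocallyIntegrable f volume →
      ∀ (z : Euc d) (r : ℝ),
        (memBc d α f z r ∨ memBu d α f z r) →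
        ∀ (a : Euc d) (s : ℝ), 0 < s →
          ball z r ⊆ cubeA d a s → s ≤ K * r →
          (C⁻¹ * setAvg (ball z r) f ≤ setAvg (cubeA d a s) f ∧
           setAvg (cubeA d a s) f ≤ C * setAvg (ball z r) f ∧
           C⁻¹ * r ≤ s ∧ s ≤ C * r) ∧
          ∀ (b : Euc d) (t : ℝ), 0 < t → cubeA d a s ⊆ cubeA d b t →
            t ^ α * setAvg (cubeA d b t) f ≤ C * (s ^ α * setAvg (cubeA d a s) f) := by
  have hd : 0 < d := by exact_mod_cast hα.trans hαd
  have : NeZero d := ⟨hd.ne'⟩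
  have hv := volume_unit_ball_toReal_pos (d := d)
  set c₁ := K ^ d / (volume (ball (0 : Euc d) 1)).toReal
  set c₂ := (2 * √d) ^ d * (volume (ball (0 : Euc d) 1)).toReal * √d ^ α
  have hc₁ : 0 < c₁ := by positivity
  have hc₂ : 0 < c₂ := by positivity
  obtain ⟨C, hc₁C, hc₂C, hc₂₁C, hdC, hKC⟩ :
      ∃ C, c₁ ≤ C ∧ c₂ ≤ C ∧ c₂ * c₁ ≤ C ∧ √d ≤ C ∧ K ≤ C := by
    refine ⟨c₁ + c₂ + c₂ * c₁ + √d + K, ?_, ?_, ?_, ?_, ?_⟩ <;>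
      nlinarith [Real.sqrt_nonneg d, mul_pos hc₂ hc₁]
  have hC : 0 < C := hK.trans_le hKC
  refine ⟨C, hC, fun f hf hfi z r hB a s hs hsub hsK => ?_⟩
  have hr : 0 < r := hB.elim (·.1) (·.1)
  have hopt : ConcentricOptimal d α f z r := hB.elim (·.concentricOptimal) (·.concentricOptimal)
  have hBQ : setAvg (ball z r) f ≤ c₁ * setAvg (cubeA d a s) f :=
    setAvg_ball_le_of_subset_cubeA hf hfi hr hs.le hsub hsK
  have hQ0 := setAvg_nonneg hf (cubeA d a s)
  refine ⟨⟨?_, ?_, ?_, ?_⟩, fun b t ht hQP => ?_⟩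
  · rw [inv_mul_le_iff₀ hC]
    exact hBQ.trans (mul_le_mul_of_nonneg_right hc₁C hQ0)
  · exact (hopt.setAvg_cubeA_le hf hfi hα.le hr hs hsub).trans
      (mul_le_mul_of_nonneg_right hc₂C (setAvg_nonneg hf _))
  · rw [inv_mul_le_iff₀ hC]
    exact (radius_le_of_ball_subset_cubeA hr hs.le hsub).trans
      (mul_le_mul_of_nonneg_right hdC hs.le)
  · exact hsK.trans (mul_le_mul_of_nonneg_right hKC hr.le)
  · calc t ^ α * setAvg (cubeA d b t) f ≤ c₂ * (s ^ α * setAvg (ball z r) f) :=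
          hopt.rpow_mul_setAvg_cubeA_le_of_subset hf hfi hα.le hr hs.le ht hsub hQP
      _ ≤ c₂ * (s ^ α * (c₁ * setAvg (cubeA d a s) f)) := by gcongr
      _ = c₂ * c₁ * (s ^ α * setAvg (cubeA d a s) f) := by ring
      _ ≤ C * (s ^ α * setAvg (cubeA d a s) f) :=
        mul_le_mul_of_nonneg_right hc₂₁C (mul_nonneg (by positivity) hQ0)
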